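/- arXiv:2404.03065 — 2 statements merged into one kernel-verified Lean document; each statement's English description precedes it below -/
import Mathlib

section
/- Non-degeneracy of [·,·]_⊛: if t ≠ 0 and p_t is a scaled hypercomplex matrix with Tr(q_t^⊛ p_t) = 0 for all scaled hypercomplex matrices q_t, then p_t = 0. -/
/-!
The form evaluates to `2 Re(conj a * c) - 2t Re(conj b * d)`. Testing `p_t = qt t c d` against
`q_t = qt t c 0` gives `2 |c|²`, and against `q_t = qt t 0 d` gives `-2t |d|²`; both vanish, so
`c = 0`, and `d = 0` because `t ≠ 0`.
-/

open Matrix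

noncomputable section

/-- The scaled hypercomplex matrix `q_t = [[a, tb],[conj b, conj a]]`. -/
def qt (t : ℝ) (a b : ℂ) : Matrix (Fin 2) (Fin 2) ℂ :=
  !![a, (t : ℂ) * b; (starRingEnd ℂ) b, (starRingEnd ℂ) a]

/-- The ⊛-adjoint `q_t^⊛ = [[conj a, -tb],[-conj b, a]]`. -/
def circAdj (t : ℝ) (a b : ℂ) : Matrix (Fin 2) (Fin 2) ℂ :=
  !![(starRingEnd ℂ) a, -((t : ℂ) * b); -((starRingEnd ℂ) b), a]

theorem trace_circAdj_mul_qt (t : ℝ) (a b c d : ℂ) :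
    (circAdj t a b * qt t c d).trace =
      2 * ((starRingEnd ℂ a * c).re - t * (starRingEnd ℂ b * d).re) := by
  simp only [circAdj, qt, trace_fin_two, mul_apply, Fin.sum_univ_two]
  apply Complex.ext <;> simp <;> ring

theorem trace_circAdj_same_fst_mul_qt (t : ℝ) (c d : ℂ) :
    (circAdj t c 0 * qt t c d).trace = 2 * Complex.normSq c := by
  rw [trace_circAdj_mul_qt, ← Complex.normSq_eq_conj_mul_self]
  simp

theorem trace_circAdj_same_snd_mul_qt (t : ℝ) (c d : ℂ) :
    (circAdj t 0 d * qt t c d).trace = -2 * t * Complex.normSq d := by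
  rw [trace_circAdj_mul_qt, ← Complex.normSq_eq_conj_mul_self]
  simp only [map_zero, zero_mul, Complex.zero_re, Complex.ofReal_zero, Complex.ofReal_re,
    zero_sub, mul_neg, neg_mul, neg_inj]
  ring

theorem qt_zero_zero (t : ℝ) : qt t 0 0 = 0 := by
  ext i j
  fin_cases i <;> fin_cases j <;> simp [qt]

/-- Non-degeneracy of the ⊛-form for `t ≠ 0`. -/
theorem stmt12 (t : ℝ) (ht : t ≠ 0) (c d : ℂ)
    (h : ∀ a b : ℂ, (circAdj t a b * qt t c d).trace = 0) :
    qt t c d = 0 := by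
  have hc : c = 0 := by
    simpa [trace_circAdj_same_fst_mul_qt] using h c 0
  have hd : d = 0 := by
    simpa [trace_circAdj_same_snd_mul_qt, ht] using h 0 d
  rw [hc, hd, qt_zero_zero]
end
end

section
/- The form [q_t, p_t]_{[*]} = Tr(p_t^{[*]} q_t) on the 4-dimensional real space of scaled hypercomplex matrices has signature (2,2) for every t ≠ 0. -/
/-!
Over `ℂ` the real number `t` has a square root `z ≠ 0`, so the form is
`2 Re (a² + t b²) = Re ((√2 a)²) + Re ((√2 z b)²)`, and `Re (w²) = (Re w)² - (Im w)²`.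
The four real functionals `Re (√2 a), Re (√2 z b), Im (√2 a), Im (√2 z b)` are coordinates
after the invertible change of variables `(a, b) ↦ (√2 a, √2 z b)`, hence linearly independent.
-/

open Matrix

noncomputable section

/-- The `[*]`-adjoint `q_t^{[*]} = [[a, t·conj b],[b, conj a]]`. -/
def bstar (t : ℝ) (a b : ℂ) : Matrix (Fin 2) (Fin 2) ℂ :=
  !![a, (t : ℂ) * (starRingEnd ℂ) b; b, (starRingEnd ℂ) a]

theorem Module.Dual.linearIndependent_of_pairwise_apply_eq_zero {K M ι : Type*} [Field K]
    [AddCommGroup M] [Module K M] {v : ι → Module.Dual K M} (x : ι → M)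
    (h_ne : Pairwise fun i j => v i (x j) = 0) (h_eq : ∀ i, v i (x i) ≠ 0) :
    LinearIndependent K v := by
  rw [linearIndependent_iff']
  intro s g hg i hi
  have hgi : g i * v i (x i) = 0 := by
    have := LinearMap.congr_fun hg (x i)
    rwa [LinearMap.sum_apply, Finset.sum_eq_single i (fun j _ hji => by simp [h_ne hji])
      (by simp [hi]), LinearMap.smul_apply, smul_eq_mul] at this
  exact (mul_eq_zero.mp hgi).resolve_right (h_eq i)

theorem Complex.sq_re (w : ℂ) : (w ^ 2).re = w.re ^ 2 - w.im ^ 2 := by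
  simp only [sq, Complex.mul_re]

theorem re_trace_bstar_mul_qt (t : ℝ) (a b : ℂ) :
    ((bstar t a b * qt t a b).trace).re = 2 * (a ^ 2 + t * b ^ 2).re := by
  simp [bstar, qt, Matrix.trace_fin_two, Complex.sq_re]
  ring

open Complex LinearMap in
theorem linearIndependent_re_im_mul_fst_snd {c d : ℂ} (hc : c ≠ 0) (hd : d ≠ 0) :
    LinearIndependent ℝ
      ![reLm ∘ₗ mulLeft ℝ c ∘ₗ fst ℝ ℂ ℂ, reLm ∘ₗ mulLeft ℝ d ∘ₗ snd ℝ ℂ ℂ,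
        imLm ∘ₗ mulLeft ℝ c ∘ₗ fst ℝ ℂ ℂ, imLm ∘ₗ mulLeft ℝ d ∘ₗ snd ℝ ℂ ℂ] := by
  refine Module.Dual.linearIndependent_of_pairwise_apply_eq_zero
    ![(c⁻¹, 0), (0, d⁻¹), (I * c⁻¹, 0), (0, I * d⁻¹)] ?_ ?_
  · intro i j hij
    fin_cases i <;> fin_cases j <;> simp [hc, hd, mul_left_comm c, mul_left_comm d] at hij ⊢
  · intro i
    fin_cases i <;> simp [hc, hd, mul_left_comm c, mul_left_comm d]

/-- For every `t ≠ 0`, the `[*]`-form `Tr(q_t^{[*]} q_t)` on the real 4-dimensional space of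
scaled hypercomplex matrices (parameters `(a, b) ∈ ℂ × ℂ`) has signature `(2,2)`: it is a
difference of two sums of two squares of linearly independent real linear functionals. -/
theorem stmt14 (t : ℝ) (ht : t ≠ 0) :
    ∃ f g h k : (ℂ × ℂ) →ₗ[ℝ] ℝ,
      LinearIndependent ℝ ![f, g, h, k] ∧
      ∀ a b : ℂ, ((bstar t a b * qt t a b).trace).re =
        f (a, b) ^ 2 + g (a, b) ^ 2 - h (a, b) ^ 2 - k (a, b) ^ 2 := by
  obtain ⟨z, hz⟩ := IsAlgClosed.exists_pow_nat_eq (t : ℂ) two_pos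
  have hz0 : z ≠ 0 := by
    rintro rfl
    exact ht (by simpa [eq_comm] using hz)
  have hc : ((√2 : ℝ) : ℂ) ^ 2 = 2 := by norm_cast; simp
  have hc0 : ((√2 : ℝ) : ℂ) ≠ 0 := by norm_cast; positivity
  refine ⟨_, _, _, _, linearIndependent_re_im_mul_fst_snd hc0 (mul_ne_zero hc0 hz0),
    fun a b => ?_⟩
  have hsum : (((√2 : ℝ) * a) ^ 2 + ((√2 : ℝ) * z * b) ^ 2 : ℂ) = 2 * (a ^ 2 + t * b ^ 2) := by
    rw [mul_pow, mul_pow, mul_pow, hc, hz, mul_add, mul_assoc]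
  simp only [LinearMap.comp_apply, LinearMap.mulLeft_apply, LinearMap.fst_apply,
    LinearMap.snd_apply, Complex.reLm_coe, Complex.imLm_coe]
  calc ((bstar t a b * qt t a b).trace).re = (2 * (a ^ 2 + t * b ^ 2)).re := by
        simp [re_trace_bstar_mul_qt]
    _ = _ := by rw [← hsum, Complex.add_re, Complex.sq_re, Complex.sq_re]; ring
end
end
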